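/- arXiv:2212.10195 — 3 statements merged into one kernel-verified Lean document; each statement's English description precedes it below -/
import Mathlib

section
/- (Quaternionic Schur triangularization) For every A ∈ ℍ^{n×n} there exist a unitary matrix U ∈ ℍ^{n×n} (U*U = Id) and an upper triangular matrix T ∈ ℍ^{n×n} such that T = U*AU, and all diagonal entries of T are complex numbers with nonnegative imaginary part. -/
open Quaternion Matrix

noncomputable section

/-- The copy of a complex number inside the quaternions (span of 1 and i). -/
def toQ (z : ℂ) : ℍ[ℝ] := ⟨z.re, z.im, 0, 0⟩

/-- First complex component of a quaternion: a = c1 a + (c2 a)·j. -/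
def c1 (a : ℍ[ℝ]) : ℂ := ⟨a.re, a.imI⟩
/-- Second complex component of a quaternion. -/
def c2 (a : ℍ[ℝ]) : ℂ := ⟨a.imJ, a.imK⟩

/-- Similarity of quaternions: p = h⁻¹ q h for some nonzero h. -/
def qSimilar (p q : ℍ[ℝ]) : Prop := ∃ h : ℍ[ℝ], h ≠ 0 ∧ p = h⁻¹ * q * h

/-- q is a right eigenvalue of A. -/
def RightEig {n : ℕ} (A : Matrix (Fin n) (Fin n) ℍ[ℝ]) (q : ℍ[ℝ]) : Prop :=
  ∃ x : Fin n → ℍ[ℝ], x ≠ 0 ∧ A.mulVec x = fun i => x i * q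

/-- The complex adjoint matrix of a quaternion matrix. -/
def fAdj {n : ℕ} (A : Matrix (Fin n) (Fin n) ℍ[ℝ]) :
    Matrix (Fin n ⊕ Fin n) (Fin n ⊕ Fin n) ℂ :=
  Matrix.fromBlocks (A.map c1) (A.map c2)
    (-(A.map (fun a => starRingEnd ℂ (c2 a)))) (A.map (fun a => starRingEnd ℂ (c1 a)))

/-- Algebraic multiplicity of an eigenvalue of a complex matrix. -/
def algMult {m : Type*} [Fintype m] [DecidableEq m] (B : Matrix m m ℂ) (μ : ℂ) : ℕ :=
  (Matrix.charpoly B).rootMultiplicity μ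

/-- Geometric multiplicity of an eigenvalue of a complex matrix. -/
def geoMult {m : Type*} [Fintype m] [DecidableEq m] (B : Matrix m m ℂ) (μ : ℂ) : ℕ :=
  Module.finrank ℂ (LinearMap.ker (Matrix.mulVecLin (B - μ • 1)))

/-- The set of right q-eigenvectors (with 0). -/
def eigSet {n : ℕ} (A : Matrix (Fin n) (Fin n) ℍ[ℝ]) (q : ℍ[ℝ]) : Set (Fin n → ℍ[ℝ]) :=
  {x | A.mulVec x = fun i => x i * q}


/-- The [q]-eigenspace as a right ℍ-subspace of ℍⁿ. -/
def Vclass {n : ℕ} (A : Matrix (Fin n) (Fin n) ℍ[ℝ]) (q : ℍ[ℝ]) :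
    Submodule ℍ[ℝ]ᵐᵒᵖ (Fin n → ℍ[ℝ]) :=
  Submodule.span ℍ[ℝ]ᵐᵒᵖ (⋃ q' ∈ {p | qSimilar p q}, eigSet A q')

/-- geometric multiplicity -/
def gm {n : ℕ} (A : Matrix (Fin n) (Fin n) ℍ[ℝ]) (q : ℍ[ℝ]) : ℕ :=
  Module.finrank ℍ[ℝ]ᵐᵒᵖ (Vclass A q)

/-!
A right eigenvector of `A` with a complex eigenvalue comes from an eigenvector of the complex
adjoint `fAdj A`: in the coordinates `q ↦ (c1 q, -conj (c2 q))`, left multiplication by a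
quaternion acts as the `2 × 2` complex block that `fAdj` puts in place of each entry.
Conjugating by `j` replaces the eigenvalue by its complex conjugate, so it can be taken in the
closed upper half plane. A unit eigenvector is the first column of a unitary matrix (a
quaternionic Householder reflection composed with a unit phase); conjugating by it leaves the
eigenvalue in the corner with zeros below it, and induction on `n` triangularizes the rest.
-/
def quatEquivPair : ℍ[ℝ] ≃+ ℂ × ℂ where
  toFun q := (c1 q, -starRingEnd ℂ (c2 q))
  invFun p := ⟨p.1.re, p.1.im, -p.2.re, p.2.im⟩
  left_inv q := by ext <;> simp [c1, c2]
  right_inv p := by ext <;> simp [c1, c2, Complex.ext_iff]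
  map_add' q q' := by ext <;> simp [c1, c2, Complex.ext_iff]; ring

@[simp] lemma quatEquivPair_symm_re (p : ℂ × ℂ) : (quatEquivPair.symm p).re = p.1.re := rfl
@[simp] lemma quatEquivPair_symm_imI (p : ℂ × ℂ) : (quatEquivPair.symm p).imI = p.1.im := rfl
@[simp] lemma quatEquivPair_symm_imJ (p : ℂ × ℂ) : (quatEquivPair.symm p).imJ = -p.2.re := rfl
@[simp] lemma quatEquivPair_symm_imK (p : ℂ × ℂ) : (quatEquivPair.symm p).imK = p.2.im := rfl

lemma mul_quatEquivPair_symm (q : ℍ[ℝ]) (p : ℂ × ℂ) :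
    q * quatEquivPair.symm p = quatEquivPair.symm (c1 q * p.1 + c2 q * p.2,
      -starRingEnd ℂ (c2 q) * p.1 + starRingEnd ℂ (c1 q) * p.2) := by
  ext <;> simp [c1, c2] <;> ring

lemma quatEquivPair_symm_smul (μ : ℂ) (p : ℂ × ℂ) :
    quatEquivPair.symm (μ • p) = quatEquivPair.symm p * toQ μ := by
  ext <;> simp only [Quaternion.re_mul, Quaternion.imI_mul, Quaternion.imJ_mul,
    Quaternion.imK_mul] <;> simp [toQ] <;> ring

def quatVec {n : ℕ} (v : Fin n ⊕ Fin n → ℂ) : Fin n → ℍ[ℝ] :=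
  fun i => quatEquivPair.symm (v (.inl i), v (.inr i))

lemma mulVec_quatVec {n : ℕ} (A : Matrix (Fin n) (Fin n) ℍ[ℝ]) (v : Fin n ⊕ Fin n → ℂ) :
    A *ᵥ quatVec v = quatVec (fAdj A *ᵥ v) := by
  ext1 i
  simp only [quatVec, fAdj, mulVec, dotProduct, mul_quatEquivPair_symm, ← map_sum]
  congr 1
  ext1 <;> simp [Prod.fst_sum, Prod.snd_sum, Finset.sum_add_distrib]

lemma quatVec_smul {n : ℕ} (μ : ℂ) (v : Fin n ⊕ Fin n → ℂ) :
    quatVec (μ • v) = fun i => quatVec v i * toQ μ := by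
  ext1 i
  simp only [quatVec, ← quatEquivPair_symm_smul, Pi.smul_apply, Prod.smul_mk]

lemma quatVec_eq_zero {n : ℕ} {v : Fin n ⊕ Fin n → ℂ} : quatVec v = 0 ↔ v = 0 := by
  simp [quatVec, funext_iff, Sum.forall, forall_and]

lemma RightEig.of_qSimilar {n : ℕ} {A : Matrix (Fin n) (Fin n) ℍ[ℝ]} {p q : ℍ[ℝ]}
    (hA : RightEig A q) (hpq : qSimilar p q) : RightEig A p := by
  obtain ⟨x, hx, hAx⟩ := hA
  obtain ⟨h, hh, rfl⟩ := hpq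
  refine ⟨MulOpposite.op h • x, fun h0 => hx (funext fun i => ?_), ?_⟩
  · simpa [hh] using congrFun h0 i
  · rw [mulVec_smul, hAx]
    ext1 i
    simp [mul_assoc, mul_inv_cancel_left₀ hh]

lemma qSimilar_toQ_conj (μ : ℂ) : qSimilar (toQ (starRingEnd ℂ μ)) (toQ μ) := by
  set j : ℍ[ℝ] := ⟨0, 0, 1, 0⟩
  have hj : j ≠ 0 := fun h => by simpa [j] using congrArg (·.imJ) h
  have hcomm : toQ μ * j = j * toQ (starRingEnd ℂ μ) := by
    ext <;> simp only [Quaternion.re_mul, Quaternion.imI_mul, Quaternion.imJ_mul,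
      Quaternion.imK_mul] <;> simp [toQ, j]
  exact ⟨j, hj, by rw [mul_assoc, hcomm, inv_mul_cancel_left₀ hj]⟩

lemma exists_rightEig_toQ {n : ℕ} [NeZero n] (A : Matrix (Fin n) (Fin n) ℍ[ℝ]) :
    ∃ μ : ℂ, 0 ≤ μ.im ∧ RightEig A (toQ μ) := by
  obtain ⟨μ, hμ⟩ := Module.End.exists_eigenvalue (fAdj A).mulVecLin
  obtain ⟨v, hv⟩ := hμ.exists_hasEigenvector
  have hA : RightEig A (toQ μ) := by
    refine ⟨quatVec v, quatVec_eq_zero.not.mpr hv.2, ?_⟩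
    rw [mulVec_quatVec, ← mulVecLin_apply, hv.apply_eq_smul, quatVec_smul]
  rcases le_total 0 μ.im with h | h
  · exact ⟨μ, h, hA⟩
  · exact ⟨starRingEnd ℂ μ, by simpa using h, hA.of_qSimilar (qSimilar_toQ_conj μ)⟩

section UnitVectors

variable {ι : Type*} [Fintype ι]

lemma star_dotProduct_self (x : ι → ℍ[ℝ]) :
    star x ⬝ᵥ x = (∑ i, normSq (x i)) • (1 : ℍ[ℝ]) := by
  simp [dotProduct, Quaternion.star_mul_self, ← Algebra.algebraMap_eq_smul_one,
    Quaternion.algebraMap_def]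

lemma sum_normSq_eq_zero {x : ι → ℍ[ℝ]} : ∑ i, normSq (x i) = 0 ↔ x = 0 := by
  simp [Finset.sum_eq_zero_iff_of_nonneg fun i _ => normSq_nonneg, funext_iff]

end UnitVectors

lemma RightEig.exists_unit {n : ℕ} {A : Matrix (Fin n) (Fin n) ℍ[ℝ]} {q : ℍ[ℝ]}
    (hA : RightEig A q) : ∃ x, star x ⬝ᵥ x = 1 ∧ A *ᵥ x = fun i => x i * q := by
  obtain ⟨x, hx, hAx⟩ := hA
  have hN : 0 < ∑ i, normSq (x i) := (Finset.sum_nonneg fun i _ => normSq_nonneg).lt_of_ne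
    (Ne.symm (sum_normSq_eq_zero.not.mpr hx))
  refine ⟨(√(∑ i, normSq (x i)))⁻¹ • x, ?_, ?_⟩
  · simp only [star_dotProduct_self, Pi.smul_apply, normSq_smul, ← Finset.mul_sum, inv_pow,
      Real.sq_sqrt hN.le, inv_mul_cancel₀ hN.ne', one_smul]
  · rw [mulVec_smul, hAx]
    ext1 i
    simp

instance : StarModule ℝ ℍ[ℝ] := ⟨fun r a => by rw [Quaternion.star_smul, star_trivial r]⟩

section Householder

variable {ι : Type*} [Fintype ι] [DecidableEq ι]

-- For `v = 0` the junk value `2 / 0 = 0` makes this `1`.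
def householder (v : ι → ℍ[ℝ]) : Matrix ι ι ℍ[ℝ] :=
  1 - (2 / ∑ i, normSq (v i)) • vecMulVec v (star v)

lemma star_householder (v : ι → ℍ[ℝ]) : star (householder v) = householder v := by
  simp [householder, star_eq_conjTranspose, conjTranspose_vecMulVec]

lemma householder_mul_self (v : ι → ℍ[ℝ]) : householder v * householder v = 1 := by
  unfold householder
  set N := ∑ i, normSq (v i)
  set P := vecMulVec v (star v)
  have hP : P * P = N • P := by
    rw [vecMulVec_mul_vecMulVec, star_dotProduct_self, smul_assoc, one_smul, vecMulVec_smul]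
  rcases eq_or_ne N 0 with hN | hN
  · simp [hN]
  · have hc : 2 / N * (2 / N) * N = 2 * (2 / N) := by field_simp
    calc (1 - (2 / N) • P) * (1 - (2 / N) • P)
        = 1 - (2 * (2 / N) - 2 / N * (2 / N) * N) • P := by
          simp only [sub_mul, mul_sub, one_mul, mul_one, smul_mul_smul_comm, hP, smul_smul]
          module
      _ = 1 := by rw [hc, sub_self, zero_smul, sub_zero]

lemma householder_mem_unitary (v : ι → ℍ[ℝ]) : householder v ∈ unitary (Matrix ι ι ℍ[ℝ]) :=
  Unitary.mem_iff.mpr ⟨by rw [star_householder, householder_mul_self],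
    by rw [star_householder, householder_mul_self]⟩

lemma householder_sub_mulVec {x y : ι → ℍ[ℝ]} (hnorm : star x ⬝ᵥ x = star y ⬝ᵥ y)
    (hreal : star x ⬝ᵥ y = star y ⬝ᵥ x) : householder (x - y) *ᵥ y = x := by
  rcases eq_or_ne x y with rfl | hxy
  · simp [householder]
  unfold householder
  set v := x - y
  set N := ∑ i, normSq (v i)
  have hN : N ≠ 0 := sum_normSq_eq_zero.not.mpr (sub_ne_zero.mpr hxy)
  have hvy : star v ⬝ᵥ y = (-(N / 2)) • (1 : ℍ[ℝ]) := by
    have h2 : N • (1 : ℍ[ℝ]) + (2 : ℝ) • (star v ⬝ᵥ y) = 0 := by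
      rw [← star_dotProduct_self]
      simp only [v, star_sub, sub_dotProduct, dotProduct_sub, hnorm, hreal]
      module
    linear_combination (norm := module) (1 / 2 : ℝ) • h2
  rw [sub_mulVec, one_mulVec, smul_mulVec, vecMulVec_mulVec, hvy, MulOpposite.op_smul,
    MulOpposite.op_one, smul_assoc, one_smul, smul_smul,
    show 2 / N * -(N / 2) = -1 by field_simp]
  simp [v]

end Householder

-- `star q * s` is self-adjoint, i.e. real: this is what the Householder reflection
-- sending `Pi.single i₀ s` to `x` needs, with `q = x i₀`.
lemma exists_normSq_eq_one_star_mul_comm (q : ℍ[ℝ]) :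
    ∃ s : ℍ[ℝ], normSq s = 1 ∧ star q * s = star s * q := by
  rcases eq_or_ne q 0 with rfl | hq
  · exact ⟨1, by simp⟩
  refine ⟨‖q‖⁻¹ • q, ?_, by rw [Quaternion.star_smul, mul_smul_comm, smul_mul_assoc]⟩
  rw [normSq_smul, normSq_eq_norm_mul_self, inv_pow, sq, inv_mul_cancel₀ (by positivity)]

lemma diagonal_mem_unitary {ι : Type*} [Fintype ι] [DecidableEq ι] {d : ι → ℍ[ℝ]}
    (hd : ∀ i, normSq (d i) = 1) : diagonal d ∈ unitary (Matrix ι ι ℍ[ℝ]) := by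
  simp [Unitary.mem_iff, star_eq_conjTranspose, diagonal_conjTranspose, Quaternion.star_mul_self,
    Quaternion.self_mul_star, hd]

lemma exists_mem_unitary_mulVec_single {ι : Type*} [Fintype ι] [DecidableEq ι] (x : ι → ℍ[ℝ])
    (hx : star x ⬝ᵥ x = 1) (i₀ : ι) :
    ∃ U ∈ unitary (Matrix ι ι ℍ[ℝ]), U *ᵥ Pi.single i₀ 1 = x := by
  obtain ⟨s, hs, hcomm⟩ := exists_normSq_eq_one_star_mul_comm (x i₀)
  obtain ⟨d, hdi₀, hd⟩ : ∃ d : ι → ℍ[ℝ], d i₀ = s ∧ ∀ i, normSq (d i) = 1 := by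
    refine ⟨Function.update 1 i₀ s, Function.update_self .., fun i => ?_⟩
    rcases eq_or_ne i i₀ with rfl | hi
    · simp [hs]
    · simp [Function.update_of_ne hi]
  refine ⟨householder (x - Pi.single i₀ s) * diagonal d,
    mul_mem (householder_mem_unitary _) (diagonal_mem_unitary hd), ?_⟩
  rw [← mulVec_mulVec, diagonal_mulVec_single, hdi₀, mul_one]
  apply householder_sub_mulVec
  · simp [hx, Pi.star_single, Quaternion.star_mul_self, hs]
  · simp [Pi.star_single, hcomm]

lemma col_star_mul_mul_eq_single {ι R : Type*} [Fintype ι] [DecidableEq ι] [Ring R] [StarRing R]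
    {U A : Matrix ι ι R} (hU : U ∈ unitary (Matrix ι ι R)) {i₀ : ι} {x : ι → R} {q : R}
    (hUx : U *ᵥ Pi.single i₀ 1 = x) (hAx : A *ᵥ x = fun i => x i * q) :
    (star U * A * U).col i₀ = Pi.single i₀ q := by
  have hAx' : A *ᵥ x = MulOpposite.op q • x := hAx
  calc (star U * A * U).col i₀ = (star U * A * U) *ᵥ Pi.single i₀ 1 := by
        rw [mulVec_single, MulOpposite.op_one, one_smul]
    _ = MulOpposite.op q • ((star U * U) *ᵥ Pi.single i₀ 1) := by
        rw [← mulVec_mulVec, hUx, ← mulVec_mulVec, hAx', mulVec_smul, ← hUx, mulVec_mulVec]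
    _ = Pi.single i₀ q := by
        rw [Unitary.star_mul_self_of_mem hU, one_mulVec, ← Pi.single_smul', op_smul_eq_mul,
          one_mul]

section BlockCons

variable {α : Type*} {n : ℕ}

def blockCons (a : α) (r c : Fin n → α) (M : Matrix (Fin n) (Fin n) α) :
    Matrix (Fin (n + 1)) (Fin (n + 1)) α :=
  Matrix.of (Fin.cons (Fin.cons a r) fun i => Fin.cons (c i) (M i))

variable {a : α} {r c : Fin n → α} {M : Matrix (Fin n) (Fin n) α}

@[simp] lemma blockCons_zero_zero : blockCons a r c M 0 0 = a := rfl
@[simp] lemma blockCons_zero_succ (j : Fin n) : blockCons a r c M 0 j.succ = r j := rfl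
@[simp] lemma blockCons_succ_zero (i : Fin n) : blockCons a r c M i.succ 0 = c i := rfl
@[simp] lemma blockCons_succ_succ (i j : Fin n) : blockCons a r c M i.succ j.succ = M i j := rfl

lemma eq_blockCons_of_col_zero [Zero α] {B : Matrix (Fin (n + 1)) (Fin (n + 1)) α}
    (hB : B.col 0 = Pi.single 0 a) :
    B = blockCons a (fun j => B 0 j.succ) 0 (B.submatrix Fin.succ Fin.succ) := by
  ext i j
  refine Fin.cases ?_ (fun i => ?_) i <;> refine Fin.cases ?_ (fun j => ?_) j
  · simpa using congrFun hB 0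
  · rfl
  · simpa [Fin.succ_ne_zero] using congrFun hB i.succ
  · rfl

lemma blockCons_mul_blockCons [NonUnitalNonAssocSemiring α] {a' : α} {r' c' : Fin n → α}
    {M' : Matrix (Fin n) (Fin n) α} :
    blockCons a r c M * blockCons a' r' c' M' =
      blockCons (a * a' + r ⬝ᵥ c') (fun j => a * r' j + (r ᵥ* M') j)
        (fun i => c i * a' + (M *ᵥ c') i) (vecMulVec c r' + M * M') := by
  ext i j
  refine Fin.cases ?_ (fun i => ?_) i <;> refine Fin.cases ?_ (fun j => ?_) j <;>
    simp [mul_apply, Fin.sum_univ_succ, dotProduct, vecMul, mulVec, vecMulVec_apply]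

lemma conjTranspose_blockCons [Star α] :
    (blockCons a r c M)ᴴ = blockCons (star a) (star c) (star r) Mᴴ := by
  ext i j
  refine Fin.cases ?_ (fun i => ?_) i <;> refine Fin.cases ?_ (fun j => ?_) j <;> rfl

lemma blockCons_one [Zero α] [One α] : blockCons 1 0 0 (1 : Matrix (Fin n) (Fin n) α) = 1 := by
  ext i j
  refine Fin.cases ?_ (fun i => ?_) i <;> refine Fin.cases ?_ (fun j => ?_) j <;>
    simp [one_apply, Fin.succ_ne_zero, (Fin.succ_ne_zero _).symm]

lemma Matrix.BlockTriangular.blockCons [Zero α] (hM : M.BlockTriangular id) :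
    (blockCons a r 0 M).BlockTriangular id := by
  intro i j hij
  induction i using Fin.cases with
  | zero => exact absurd hij (Fin.not_lt_zero j)
  | succ i =>
    induction j using Fin.cases with
    | zero => rfl
    | succ j => exact hM (Fin.succ_lt_succ_iff.mp hij)

variable [Ring α] [StarRing α]

lemma blockCons_one_mem_unitary {W : Matrix (Fin n) (Fin n) α}
    (hW : W ∈ unitary (Matrix (Fin n) (Fin n) α)) :
    blockCons 1 0 0 W ∈ unitary (Matrix (Fin (n + 1)) (Fin (n + 1)) α) := by
  rw [Unitary.mem_iff, star_eq_conjTranspose] at hW ⊢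
  simp [conjTranspose_blockCons, blockCons_mul_blockCons, hW]
  exact blockCons_one

lemma star_blockCons_one_mul_mul (W : Matrix (Fin n) (Fin n) α) :
    star (blockCons 1 0 0 W) * blockCons a r 0 M * blockCons 1 0 0 W =
      blockCons a (r ᵥ* W) 0 (star W * M * W) := by
  simp [star_eq_conjTranspose, conjTranspose_blockCons, blockCons_mul_blockCons]
  rfl

end BlockCons

theorem exists_mem_unitary_conj_eq_blockCons {n : ℕ}
    (A : Matrix (Fin (n + 1)) (Fin (n + 1)) ℍ[ℝ]) :
    ∃ U ∈ unitary (Matrix (Fin (n + 1)) (Fin (n + 1)) ℍ[ℝ]), ∃ μ : ℂ, 0 ≤ μ.im ∧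
      ∃ r A', star U * A * U = blockCons (toQ μ) r 0 A' := by
  obtain ⟨μ, hμ, hA⟩ := exists_rightEig_toQ A
  obtain ⟨x, hx, hAx⟩ := hA.exists_unit
  obtain ⟨U, hU, hUx⟩ := exists_mem_unitary_mulVec_single x hx 0
  exact ⟨U, hU, μ, hμ, _, _, eq_blockCons_of_col_zero (col_star_mul_mul_eq_single hU hUx hAx)⟩

theorem exists_mem_unitary_schur (n : ℕ) (A : Matrix (Fin n) (Fin n) ℍ[ℝ]) :
    ∃ U ∈ unitary (Matrix (Fin n) (Fin n) ℍ[ℝ]), (star U * A * U).BlockTriangular id ∧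
      ∀ i, ∃ μ : ℂ, 0 ≤ μ.im ∧ (star U * A * U) i i = toQ μ := by
  induction n with
  | zero => exact ⟨1, one_mem _, fun i => i.elim0, fun i => i.elim0⟩
  | succ n ih =>
    obtain ⟨U, hU, μ, hμ, r, A', hUA⟩ := exists_mem_unitary_conj_eq_blockCons A
    obtain ⟨W, hW, htri, hdiag⟩ := ih A'
    have hT : star (U * blockCons 1 0 0 W) * A * (U * blockCons 1 0 0 W) =
        blockCons (toQ μ) (r ᵥ* W) 0 (star W * A' * W) := by
      rw [← star_blockCons_one_mul_mul, ← hUA, star_mul]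
      simp only [mul_assoc]
    refine ⟨_, mul_mem hU (blockCons_one_mem_unitary hW), hT ▸ htri.blockCons, ?_⟩
    rw [hT]
    exact Fin.cases ⟨μ, hμ, rfl⟩ hdiag

/-- Quaternionic Schur triangularization. -/
theorem quaternion_schur {n : ℕ} (A : Matrix (Fin n) (Fin n) ℍ[ℝ]) :
    ∃ U T : Matrix (Fin n) (Fin n) ℍ[ℝ],
      Uᴴ * U = 1 ∧ U * Uᴴ = 1 ∧ T = Uᴴ * A * U ∧
      (∀ i j : Fin n, j < i → T i j = 0) ∧
      (∀ i : Fin n, ∃ μ : ℂ, 0 ≤ μ.im ∧ T i i = toQ μ) := by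
  obtain ⟨U, hU, htri, hdiag⟩ := exists_mem_unitary_schur n A
  rw [Unitary.mem_iff, star_eq_conjTranspose] at hU
  rw [star_eq_conjTranspose] at htri hdiag
  exact ⟨U, _, hU.1, hU.2, rfl, fun i j hij => htri hij, hdiag⟩
end
end

section
/- Let A ∈ ℍ^{n×n}, q a right eigenvalue, and λ_q the unique complex number with nonnegative imaginary part similar to q. Then the algebraic multiplicity a.m.(q,A), defined as the number of occurrences of λ_q on the diagonal of any Schur triangularization T = U*AU, is well-defined (independent of the choice of U and T), and equals a.m.(λ_q, f(A)) if Im(λ_q) > 0, and equals (1/2)·a.m.(λ_q, f(A)) if λ_q is real. -/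
open Quaternion Matrix

noncomputable section

/-!
Since `fAdj` is multiplicative, `fAdj (Uᴴ * A * U)` is conjugate to `fAdj A` whenever `U` is
unitary, so `fAdj A` and `fAdj T` have the same characteristic polynomial. If `T` is upper
triangular with diagonal entries `μ i ∈ ℂ`, then listing the rows of `fAdj T` in the order
`1, 1', 2, 2', …` makes it upper triangular with diagonal `μ 1, conj (μ 1), μ 2, conj (μ 2), …`.
Hence the multiplicity of `λ` in `fAdj A` is `#{i | μ i = λ} + #{i | conj (μ i) = λ}`. When all
`μ i` lie in the closed upper half-plane, the second count vanishes if `Im λ > 0` and equals the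
first if `λ` is real.
-/

open Polynomial Finset ComplexConjugate

theorem Polynomial.rootMultiplicity_prod_X_sub_C {R ι : Type*} [CommRing R] [IsDomain R]
    [DecidableEq R] [Fintype ι] (f : ι → R) (a : R) :
    (∏ i, (X - C (f i))).rootMultiplicity a = #{i | f i = a} := by
  have : ∏ i, (X - C (f i)) = ((univ.val.map f).map fun b => X - C b).prod := by
    rw [Multiset.map_map]; rfl
  rw [← count_roots, this, roots_multiset_prod_X_sub_C, Multiset.count_map]
  simp_rw [eq_comm (a := a)]
  rfl

theorem Matrix.charpoly_of_blockTriangular_injective {R ι α : Type*} [CommRing R]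
    [Fintype ι] [DecidableEq ι] [LinearOrder α] {M : Matrix ι ι R} {b : ι → α}
    (hM : M.BlockTriangular b) (hb : Function.Injective b) :
    M.charpoly = ∏ i, (X - C (M i i)) :=
  letI : LinearOrder ι := LinearOrder.lift' b hb
  charpoly_of_isUpperTriangular M hM

theorem Finset.card_filter_sum_type {α β : Type*} [Fintype α] [Fintype β] (p : α ⊕ β → Prop)
    [DecidablePred p] :
    #{x | p x} = #{a | p (Sum.inl a)} + #{b | p (Sum.inr b)} := by
  simp only [card_filter, Fintype.sum_sum_type]

theorem toQ_injective : Function.Injective toQ := fun _ _ h =>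
  Complex.ext (congrArg QuaternionAlgebra.re h) (congrArg QuaternionAlgebra.imI h)

lemma c1_zero : c1 0 = 0 := by simp [c1, Complex.ext_iff]
lemma c2_zero : c2 0 = 0 := by simp [c2, Complex.ext_iff]

lemma c1_add (a b : ℍ[ℝ]) : c1 (a + b) = c1 a + c1 b := by simp [c1, Complex.ext_iff]
lemma c2_add (a b : ℍ[ℝ]) : c2 (a + b) = c2 a + c2 b := by simp [c2, Complex.ext_iff]

lemma c1_sum {ι : Type*} (s : Finset ι) (f : ι → ℍ[ℝ]) :
    c1 (∑ x ∈ s, f x) = ∑ x ∈ s, c1 (f x) := map_sum (AddMonoidHom.mk' c1 c1_add) f s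
lemma c2_sum {ι : Type*} (s : Finset ι) (f : ι → ℍ[ℝ]) :
    c2 (∑ x ∈ s, f x) = ∑ x ∈ s, c2 (f x) := map_sum (AddMonoidHom.mk' c2 c2_add) f s

lemma c1_mul (a b : ℍ[ℝ]) : c1 (a * b) = c1 a * c1 b - c2 a * conj (c2 b) := by
  simp only [c1, c2, re_mul, imI_mul, Complex.ext_iff, Complex.sub_re, Complex.sub_im,
    Complex.mul_re, Complex.mul_im, Complex.conj_re, Complex.conj_im]
  constructor <;> ring

lemma c2_mul (a b : ℍ[ℝ]) : c2 (a * b) = c1 a * c2 b + c2 a * conj (c1 b) := by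
  simp only [c1, c2, imJ_mul, imK_mul, Complex.ext_iff, Complex.add_re, Complex.add_im,
    Complex.mul_re, Complex.mul_im, Complex.conj_re, Complex.conj_im]
  constructor <;> ring

lemma c1_toQ (z : ℂ) : c1 (toQ z) = z := rfl
lemma c2_toQ (z : ℂ) : c2 (toQ z) = 0 := by simp [c2, toQ, Complex.ext_iff]

lemma fAdj_one {n : ℕ} : fAdj (1 : Matrix (Fin n) (Fin n) ℍ[ℝ]) = 1 := by
  ext (i | i) (j | j) <;> by_cases h : i = j <;> simp [fAdj, one_apply, h, c1, c2, Complex.ext_iff]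

lemma fAdj_mul {n : ℕ} (A B : Matrix (Fin n) (Fin n) ℍ[ℝ]) :
    fAdj (A * B) = fAdj A * fAdj B := by
  ext (i | i) (j | j) <;>
    simp only [fAdj, mul_apply, Fintype.sum_sum_type, fromBlocks_apply₁₁, fromBlocks_apply₁₂,
      fromBlocks_apply₂₁, fromBlocks_apply₂₂, map_apply, Matrix.neg_apply, c1_sum, c2_sum, map_sum,
      c1_mul, c2_mul, map_add, map_sub, map_mul, Complex.conj_conj, ← sum_add_distrib,
      ← sum_neg_distrib] <;>
    exact sum_congr rfl fun k _ => by ring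

lemma charpoly_fAdj_conj {n : ℕ} (A U : Matrix (Fin n) (Fin n) ℍ[ℝ]) (hU : U * Uᴴ = 1) :
    (fAdj (Uᴴ * A * U)).charpoly = (fAdj A).charpoly := by
  rw [fAdj_mul, fAdj_mul, charpoly_mul_comm, ← mul_assoc, ← fAdj_mul U, hU, fAdj_one, one_mul]

def interleave (n : ℕ) : Fin n ⊕ Fin n → ℕ :=
  Sum.elim (fun i => 2 * (i : ℕ)) fun i => 2 * (i : ℕ) + 1

lemma interleave_injective (n : ℕ) : Function.Injective (interleave n) := by
  rintro (i | i) (j | j) h <;> simp only [interleave, Sum.elim_inl, Sum.elim_inr] at h <;>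
    simp only [Sum.inl.injEq, Sum.inr.injEq, reduceCtorEq] <;> omega

lemma fAdj_blockTriangular {n : ℕ} {T : Matrix (Fin n) (Fin n) ℍ[ℝ]} (hT : T.IsUpperTriangular)
    (hd : ∀ i, c2 (T i i) = 0) :
    (fAdj T).BlockTriangular (interleave n) := by
  rintro (i | i) (j | j) h <;> simp only [interleave, Sum.elim_inl, Sum.elim_inr] at h <;>
    simp only [fAdj, fromBlocks_apply₁₁, fromBlocks_apply₁₂, fromBlocks_apply₂₁,
      fromBlocks_apply₂₂, map_apply, Matrix.neg_apply, neg_eq_zero, map_eq_zero]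
  · rw [hT (show j < i by omega), c1_zero]
  · rw [hT (show j < i by omega), c2_zero]
  · obtain hji | rfl := (show j ≤ i by omega).lt_or_eq
    · rw [hT hji, c2_zero]
    · exact hd j
  · rw [hT (show j < i by omega), c1_zero]

lemma algMult_fAdj_of_isUpperTriangular {n : ℕ} {T : Matrix (Fin n) (Fin n) ℍ[ℝ]}
    (hT : T.IsUpperTriangular) {μ : Fin n → ℂ} (hμ : ∀ i, T i i = toQ (μ i)) (z : ℂ) :
    algMult (fAdj T) z = #{i | μ i = z} + #{i | conj (μ i) = z} := by
  rw [algMult, charpoly_of_blockTriangular_injective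
    (fAdj_blockTriangular hT fun i => by rw [hμ, c2_toQ]) (interleave_injective n),
    rootMultiplicity_prod_X_sub_C, card_filter_sum_type]
  simp [fAdj, hμ, c1_toQ]

theorem algMult_well_defined_general {n : ℕ} (A : Matrix (Fin n) (Fin n) ℍ[ℝ]) (lq : ℂ) :
    ∀ U T : Matrix (Fin n) (Fin n) ℍ[ℝ],
      Uᴴ * U = 1 → U * Uᴴ = 1 → T = Uᴴ * A * U →
      (∀ i j : Fin n, j < i → T i j = 0) →
      (∀ i : Fin n, ∃ μ : ℂ, 0 ≤ μ.im ∧ T i i = toQ μ) →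
      (0 < lq.im → Set.ncard {i : Fin n | T i i = toQ lq} = algMult (fAdj A) lq) ∧
      (lq.im = 0 → 2 * Set.ncard {i : Fin n | T i i = toQ lq} = algMult (fAdj A) lq) := by
  intro U T _ hU hT htri hdiag
  choose μ hμim hμ using hdiag
  have hmult : algMult (fAdj A) lq = #{i | μ i = lq} + #{i | conj (μ i) = lq} := by
    rw [algMult, ← charpoly_fAdj_conj A U hU, ← hT]
    exact algMult_fAdj_of_isUpperTriangular (fun i j h => htri i j h) hμ lq
  have hcount : {i | T i i = toQ lq}.ncard = #{i | μ i = lq} := by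
    simp only [hμ, toQ_injective.eq_iff, ← coe_filter_univ, Set.ncard_coe_finset]
  constructor
  · intro hpos
    have hconj : #{i | conj (μ i) = lq} = 0 := by
      refine card_eq_zero.2 (filter_eq_empty_iff.2 fun i _ h => ?_)
      have := congrArg Complex.im h
      rw [Complex.conj_im] at this
      linarith [hμim i]
    omega
  · intro hreal
    have hconj : #{i | conj (μ i) = lq} = #{i | μ i = lq} := by
      congr 1
      exact filter_congr fun i _ => (RingHom.injective _).eq_iff' (Complex.conj_eq_iff_im.2 hreal)
    omega

/-- The algebraic multiplicity (number of occurrences of λ_q on the diagonal of any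
Schur triangularization) is well-defined and equals a.m.(λ_q, f(A)) when Im λ_q > 0,
and half of it when λ_q is real. -/
theorem algMult_well_defined {n : ℕ} (A : Matrix (Fin n) (Fin n) ℍ[ℝ])
    (q : ℍ[ℝ]) (hq : RightEig A q) (lq : ℂ) (him : 0 ≤ lq.im)
    (hsim : qSimilar q (toQ lq)) :
    ∀ U T : Matrix (Fin n) (Fin n) ℍ[ℝ],
      Uᴴ * U = 1 → U * Uᴴ = 1 → T = Uᴴ * A * U →
      (∀ i j : Fin n, j < i → T i j = 0) →
      (∀ i : Fin n, ∃ μ : ℂ, 0 ≤ μ.im ∧ T i i = toQ μ) →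
      (0 < lq.im → Set.ncard {i : Fin n | T i i = toQ lq} = algMult (fAdj A) lq) ∧
      (lq.im = 0 → 2 * Set.ncard {i : Fin n | T i i = toQ lq} = algMult (fAdj A) lq) :=
  algMult_well_defined_general A lq
end
end

section
/- If A ∈ ℍ^{n×n} is normal (AA* = A*A), then for every right eigenvalue q of A, the algebraic and geometric multiplicities of q coincide: a.m.(q,A) = g.m.(q,A). -/
open Quaternion Matrix

noncomputable section

/-! A unitary change of basis preserves normality, and it preserves the geometric multiplicity
because it is a right-ℍ-linear automorphism of ℍⁿ carrying right eigenvectors to right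
eigenvectors for the same eigenvalue; so `A` may be replaced by its Schur form `T`. A normal
upper-triangular quaternion matrix is diagonal: inductively on `i`, the `(i, i)` entries of `TTᴴ`
and `TᴴT` are the squared norms of row `i` and of column `i`, and the column has already been
cleared. For a diagonal matrix the `[q]`-eigenspace is spanned by the standard vectors `eᵢ` with
`Tᵢᵢ` similar to `q`; since similarity preserves real part and norm, a similarity class contains
exactly one complex number with nonnegative imaginary part, so these are the `i` with
`Tᵢᵢ = λ_q`. -/

open MulOpposite

lemma qSimilar.symm {p q : ℍ[ℝ]} (h : qSimilar p q) : qSimilar q p := by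
  obtain ⟨h, h0, rfl⟩ := h
  exact ⟨h⁻¹, inv_ne_zero h0, by simp [mul_assoc, h0]⟩

lemma qSimilar.trans {p q r : ℍ[ℝ]} (hpq : qSimilar p q) (hqr : qSimilar q r) :
    qSimilar p r := by
  obtain ⟨h, h0, rfl⟩ := hpq
  obtain ⟨k, k0, rfl⟩ := hqr
  exact ⟨k * h, mul_ne_zero k0 h0, by simp only [_root_.mul_inv_rev, mul_assoc]⟩

lemma qSimilar_of_mul_eq_mul {a b h : ℍ[ℝ]} (h0 : h ≠ 0) (hab : a * h = h * b) :
    qSimilar b a :=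
  ⟨h, h0, by rw [mul_assoc, hab, ← mul_assoc, inv_mul_cancel₀ h0, one_mul]⟩

lemma qSimilar.re_eq {p q : ℍ[ℝ]} (h : qSimilar p q) : p.re = q.re := by
  obtain ⟨h, h0, rfl⟩ := h
  have re_mul_comm : ∀ x y : ℍ[ℝ], (x * y).re = (y * x).re := fun x y => by
    simp only [Quaternion.re_mul]; ring
  rw [mul_assoc, re_mul_comm, mul_assoc, mul_inv_cancel₀ h0, mul_one]

lemma qSimilar.normSq_eq {p q : ℍ[ℝ]} (h : qSimilar p q) : normSq p = normSq q := by
  obtain ⟨h, h0, rfl⟩ := h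
  have : normSq h ≠ 0 := by simpa using h0
  rw [map_mul, map_mul, map_inv₀]
  field_simp

lemma eq_of_qSimilar_toQ {μ l : ℂ} (hμ : 0 ≤ μ.im) (hl : 0 ≤ l.im)
    (h : qSimilar (toQ μ) (toQ l)) : μ = l := by
  have hre : μ.re = l.re := h.re_eq
  have hnormSq := h.normSq_eq
  rw [Quaternion.normSq_def', Quaternion.normSq_def'] at hnormSq
  simp only [toQ, hre] at hnormSq
  exact Complex.ext hre ((sq_eq_sq₀ hμ hl).mp (by linarith))

lemma isStarNormal_star_mul_mul {R : Type*} [Monoid R] [StarMul R] {u a : R}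
    (hu : u * star u = 1) [ha : IsStarNormal a] : IsStarNormal (star u * a * u) := by
  refine ⟨?_⟩
  simp only [Commute, SemiconjBy, star_mul, star_star, mul_assoc]
  simp only [← mul_assoc u (star u), hu, one_mul]
  rw [← mul_assoc (star a), ha.star_comm_self.eq, mul_assoc]

lemma mul_conjTranspose_self_apply_self {ι : Type*} [Fintype ι] (T : Matrix ι ι ℍ[ℝ])
    (i : ι) :
    (T * Tᴴ) i i = ((∑ k, normSq (T i k) : ℝ) : ℍ[ℝ]) := by
  simp only [mul_apply, conjTranspose_apply, self_mul_star]
  exact (map_sum (algebraMap ℝ ℍ[ℝ]) _ _).symm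

lemma conjTranspose_mul_self_apply_self {ι : Type*} [Fintype ι] (T : Matrix ι ι ℍ[ℝ])
    (i : ι) :
    (Tᴴ * T) i i = ((∑ k, normSq (T k i) : ℝ) : ℍ[ℝ]) := by
  simp only [mul_apply, conjTranspose_apply, star_mul_self]
  exact (map_sum (algebraMap ℝ ℍ[ℝ]) _ _).symm

lemma isDiag_of_isStarNormal_of_blockTriangular {ι : Type*} [Fintype ι] [LinearOrder ι]
    {T : Matrix ι ι ℍ[ℝ]} [IsStarNormal T] (htri : T.BlockTriangular id) : T.IsDiag := by
  intro i
  induction i using WellFoundedLT.induction with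
  | _ i ih =>
  have hcol : ∀ k, k ≠ i → T k i = 0 := fun k hk =>
    hk.lt_or_gt.elim (fun hlt => ih k hlt hk) (fun hgt => htri hgt)
  have hrow : ∑ k, normSq (T i k) = normSq (T i i) := by
    have := congrFun (congrFun (star_comm_self' T).symm i) i
    rw [star_eq_conjTranspose, mul_conjTranspose_self_apply_self,
      conjTranspose_mul_self_apply_self, coe_inj] at this
    rw [this, Finset.sum_eq_single i (fun k _ hk => by simp [hcol k hk]) (by simp)]
  have hrest : ∑ k ∈ Finset.univ.erase i, normSq (T i k) = 0 := by
    rw [← Finset.add_sum_erase _ _ (Finset.mem_univ i)] at hrow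
    linarith
  intro j hij
  rw [Finset.sum_eq_zero_iff_of_nonneg fun _ _ => normSq_nonneg] at hrest
  exact normSq_eq_zero.mp (hrest j (by simp [Ne.symm hij]))

lemma mem_eigSet_iff {n : ℕ} {A : Matrix (Fin n) (Fin n) ℍ[ℝ]} {q : ℍ[ℝ]}
    {x : Fin n → ℍ[ℝ]} :
    x ∈ eigSet A q ↔ A *ᵥ x = op q • x :=
  Iff.rfl

section Similarity

variable {n : ℕ} {A P Q : Matrix (Fin n) (Fin n) ℍ[ℝ]}

lemma mulVec_mem_eigSet_iff (hQP : Q * P = 1) (hPQ : P * Q = 1) {q : ℍ[ℝ]}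
    {x : Fin n → ℍ[ℝ]} : P *ᵥ x ∈ eigSet A q ↔ x ∈ eigSet (Q * A * P) q := by
  simp only [mem_eigSet_iff]
  constructor
  · intro hx
    rw [← mulVec_mulVec, ← mulVec_mulVec, hx, mulVec_smul, mulVec_mulVec, hQP, one_mulVec]
  · intro hx
    calc A *ᵥ (P *ᵥ x) = P *ᵥ ((Q * A * P) *ᵥ x) := by
          simp only [mulVec_mulVec, ← Matrix.mul_assoc, hPQ, Matrix.one_mul]
      _ = op q • P *ᵥ x := by rw [hx, mulVec_smul]

lemma gm_conj (hQP : Q * P = 1) (hPQ : P * Q = 1) (q : ℍ[ℝ]) :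
    gm (Q * A * P) q = gm A q := by
  let e : (Fin n → ℍ[ℝ]) ≃ₗ[ℍ[ℝ]ᵐᵒᵖ] (Fin n → ℍ[ℝ]) :=
    .ofLinearMap (f := mulVecBilin ℍ[ℝ] ℍ[ℝ]ᵐᵒᵖ P)
      (g := mulVecBilin ℍ[ℝ] ℍ[ℝ]ᵐᵒᵖ Q)
      (LinearMap.ext fun x => by simp [mulVec_mulVec, hPQ])
      (LinearMap.ext fun x => by simp [mulVec_mulVec, hQP])
  have himage : ∀ q', e '' eigSet (Q * A * P) q' = eigSet A q' := fun q' =>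
    Set.ext fun y => ⟨by rintro ⟨x, hx, rfl⟩; exact (mulVec_mem_eigSet_iff hQP hPQ).2 hx,
      fun hy => ⟨Q *ᵥ y, (mulVec_mem_eigSet_iff hQP hPQ).1 (by simpa [mulVec_mulVec, hPQ]),
        by simp [e, mulVec_mulVec, hPQ]⟩⟩
  have hV : (Vclass (Q * A * P) q).map e.toLinearMap = Vclass A q := by
    simp only [Vclass, Submodule.map_span, Set.image_iUnion₂, LinearEquiv.coe_coe, himage]
  rw [gm, gm, ← hV, LinearEquiv.finrank_map_eq]

end Similarity

lemma op_smul_single_one {ι R : Type*} [Semiring R] [DecidableEq ι] (i : ι) (c : Rᵐᵒᵖ) :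
    c • (Pi.single i 1 : ι → R) = Pi.single i c.unop := by
  rw [← Pi.single_smul', smul_eq_mul_unop, one_mul]

lemma linearIndependent_single_one_op (ι R : Type*) [Ring R] [Fintype ι] [DecidableEq ι] :
    LinearIndependent Rᵐᵒᵖ (fun i : ι => Pi.single i (1 : R)) := by
  rw [Fintype.linearIndependent_iff]
  intro g hg i
  have hsum : ∑ j, g j • Pi.single j (1 : R) = fun j => (g j).unop := by
    simp_rw [op_smul_single_one]
    exact Finset.univ_sum_single _
  simpa using congrFun (hsum.symm.trans hg) i

section Diagonal

variable {n : ℕ} {d : Fin n → ℍ[ℝ]} {q : ℍ[ℝ]} {l : ℂ}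

lemma Vclass_diagonal (hd : ∀ i, ∃ μ : ℂ, 0 ≤ μ.im ∧ d i = toQ μ) (hl : 0 ≤ l.im)
    (hql : qSimilar q (toQ l)) :
    Vclass (diagonal d) q =
      Submodule.span ℍ[ℝ]ᵐᵒᵖ ((fun i => Pi.single i 1) '' {i | d i = toQ l}) := by
  apply le_antisymm
  · rw [Vclass, Submodule.span_le, Set.iUnion₂_subset_iff]
    intro q' hq' x hx
    have hsupp : ∀ i, x i ≠ 0 → d i = toQ l := fun i hxi => by
      have hi : d i * x i = x i * q' := by simpa [mulVec_diagonal] using congrFun hx i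
      obtain ⟨μ, hμ, hdi⟩ := hd i
      have hsim : qSimilar (toQ μ) (toQ l) :=
        hdi ▸ (qSimilar_of_mul_eq_mul hxi hi).symm.trans (hq'.trans hql)
      rw [hdi, eq_of_qSimilar_toQ hμ hl hsim]
    rw [SetLike.mem_coe, ← Finset.univ_sum_single x]
    refine Submodule.sum_mem _ fun i _ => ?_
    by_cases hxi : x i = 0
    · simp [hxi]
    · rw [← unop_op (x i), ← op_smul_single_one]
      exact Submodule.smul_mem _ _ (Submodule.subset_span ⟨i, hsupp i hxi, rfl⟩)
  · refine Submodule.span_mono ?_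
    rintro _ ⟨i, hi, rfl⟩
    refine Set.mem_biUnion hql.symm ?_
    rw [mem_eigSet_iff, diagonal_mulVec_single, op_smul_single_one, unop_op, hi, mul_one]

lemma gm_diagonal (hd : ∀ i, ∃ μ : ℂ, 0 ≤ μ.im ∧ d i = toQ μ) (hl : 0 ≤ l.im)
    (hql : qSimilar q (toQ l)) : gm (diagonal d) q = Set.ncard {i | d i = toQ l} := by
  have hli := (linearIndependent_single_one_op (Fin n) ℍ[ℝ]).comp _
    (Subtype.val_injective (p := (· ∈ {i | d i = toQ l})))
  classical
  rw [gm, Vclass_diagonal hd hl hql, Set.image_eq_range, ← Nat.card_coe_set_eq,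
    Nat.card_eq_fintype_card]
  exact finrank_span_eq_card hli

end Diagonal

theorem normal_am_eq_gm_general {n : ℕ} (A : Matrix (Fin n) (Fin n) ℍ[ℝ])
    (hA : A * Aᴴ = Aᴴ * A) (q : ℍ[ℝ])
    (lq : ℂ) (him : 0 ≤ lq.im) (hsim : qSimilar q (toQ lq)) :
    ∀ U T : Matrix (Fin n) (Fin n) ℍ[ℝ],
      Uᴴ * U = 1 → U * Uᴴ = 1 → T = Uᴴ * A * U →
      (∀ i j : Fin n, j < i → T i j = 0) →
      (∀ i : Fin n, ∃ μ : ℂ, 0 ≤ μ.im ∧ T i i = toQ μ) →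
      Set.ncard {i : Fin n | T i i = toQ lq} = gm A q := by
  intro U T hU₁ hU₂ hT htri hTii
  have : IsStarNormal A := ⟨hA.symm⟩
  have : IsStarNormal T := hT ▸ isStarNormal_star_mul_mul hU₂
  have hTdiag : T.IsDiag :=
    isDiag_of_isStarNormal_of_blockTriangular fun i j h => htri i j h
  calc Set.ncard {i | T i i = toQ lq} = gm (diagonal T.diag) q :=
        (gm_diagonal hTii him hsim).symm
    _ = gm A q := by rw [hTdiag.diagonal_diag, hT, gm_conj hU₁ hU₂]

/-- For a normal quaternion matrix, algebraic and geometric multiplicities of every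
right eigenvalue coincide. -/
theorem normal_am_eq_gm {n : ℕ} (A : Matrix (Fin n) (Fin n) ℍ[ℝ])
    (hA : A * Aᴴ = Aᴴ * A) (q : ℍ[ℝ]) (hq : RightEig A q)
    (lq : ℂ) (him : 0 ≤ lq.im) (hsim : qSimilar q (toQ lq)) :
    ∀ U T : Matrix (Fin n) (Fin n) ℍ[ℝ],
      Uᴴ * U = 1 → U * Uᴴ = 1 → T = Uᴴ * A * U →
      (∀ i j : Fin n, j < i → T i j = 0) →
      (∀ i : Fin n, ∃ μ : ℂ, 0 ≤ μ.im ∧ T i i = toQ μ) →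
      Set.ncard {i : Fin n | T i i = toQ lq} = gm A q :=
  normal_am_eq_gm_general A hA q lq him hsim
end
end
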